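/- arXiv:1106.5410 — 2 statements merged into one kernel-verified Lean document; each statement's English description precedes it below -/
import Mathlib

section
/- For the D_3 minimal puncture, the Higgs field φ(y) = X/y + M with X the nilpotent element X⁻₁,₂ in so(6) and M a generic element of so(6) yields characteristic polynomial coefficients satisfying φ₂ = 2a/y + O(1) and φ₄ = a²/y² + O(y⁻¹) for some a depending on M, so that the leading pole coefficients obey c⁽⁴⁾₂ = (1/4)(c⁽²⁾₁)². -/
/-!
Swap the two variables, so that `det (q - X - y M)` becomes a polynomial in `y` over `ℂ[q]`, and
work over the field `ℂ(q)`. Since `X² = 0`, `q - X` has inverse `q⁻¹ + q⁻² X`, so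
`det (q - X - y M) = q⁶ det (1 + y W)` with `W = -(q⁻¹ M + q⁻² X M)`. Up to order `y²` the second
factor is `1 + y tr W + y² ((tr W)² - tr (W²)) / 2`, which gives `c⁽²⁾₁ = -tr (X M)` and
`c⁽⁴⁾₂ = ((tr X M)² - tr (X M X M)) / 2`. For `M ∈ so(6)` one has `tr (X M X M) = (tr X M)² / 2`,
whence `c⁽⁴⁾₂ = (c⁽²⁾₁)² / 4`.
-/

open Polynomial

/-- The symmetric form J = ((0,1₃),(1₃,0)) defining so(6). -/
def J6 : Matrix (Fin 6) (Fin 6) ℂ :=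
  fun i j => if i.val + 3 = j.val ∨ j.val + 3 = i.val then 1 else 0

/-- The nilpotent X⁻₁,₂ = E₁,₂ − E₅,₄ (0-based entries (0,1) and (4,3)). -/
def Xmin12 : Matrix (Fin 6) (Fin 6) ℂ :=
  Matrix.single 0 1 1 - Matrix.single 4 3 1

/-- y·φ(y) = X + y·M, as a matrix of polynomials in y. -/
noncomputable def higgsNum (M : Matrix (Fin 6) (Fin 6) ℂ) : Matrix (Fin 6) (Fin 6) (Polynomial ℂ) :=
  Xmin12.map C + (X : Polynomial ℂ) • M.map C

open Matrix Polynomial.Bivariate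

theorem Polynomial.Bivariate.coeff_coeff_swap {R : Type*} [CommSemiring R] (p : R[X][X])
    (i j : ℕ) : ((swap p).coeff i).coeff j = (p.coeff j).coeff i := by
  induction p using Polynomial.induction_on' with
  | add p q hp hq => simp only [map_add, coeff_add, hp, hq]
  | monomial m a =>
    induction a using Polynomial.induction_on' with
    | add a b ha hb => simp only [(monomial m).map_add, map_add, coeff_add, ha, hb]
    | monomial l r =>
      rw [swap_monomial_monomial]
      simp only [coeff_monomial]
      split_ifs <;> simp_all [coeff_monomial]

namespace Matrix

section CommRing

variable {n : Type*} [Fintype n]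

theorem trace_mul_self_smul_add_smul_mul {R : Type*} [CommRing R] (u : R)
    (A B : Matrix n n R) :
    trace ((u • B + u ^ 2 • (A * B)) * (u • B + u ^ 2 • (A * B))) =
      u ^ 2 * trace (B * B) + 2 * u ^ 3 * trace (A * B * B) + u ^ 4 * trace (A * B * (A * B)) := by
  have hcycle : trace (B * (A * B)) = trace (A * B * B) := trace_mul_comm _ _
  simp only [add_mul, mul_add, smul_mul_smul_comm, trace_add, trace_smul, hcycle, smul_eq_mul]
  ring

variable [DecidableEq n]

theorem two_mul_coeff_two_det_one_add_X_smul {R : Type*} [CommRing R]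
    (W : Matrix n n R) :
    2 * (det (1 + (X : R[X]) • W.map C)).coeff 2 = W.trace ^ 2 - (W * W).trace := by
  set P := det (1 + (X : R[X]) • W.map C)
  set Q := det (1 + (X : R[X]) • (-W).map C)
  have hQ2 : Q.coeff 2 = P.coeff 2 := by
    simp only [Q, P, coeff_det_one_add_X_smul_eq_sum_minors, submatrix_neg, Pi.neg_apply, det_neg,
      Fintype.card_coe]
    exact Finset.sum_congr rfl fun s hs => by rw [(Finset.mem_powersetCard.mp hs).2]; ring
  -- `Q(y) = P(-y)` has the same `y²`-coefficient as `P`, and `P Q = det (1 - y² W²)`.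
  have hPQ : P * Q = det (1 + (X ^ 2 : R[X]) • (-(W * W)).map C) := by
    rw [← det_mul, Matrix.map_neg _ (map_neg C), Matrix.map_neg _ (map_neg C), Matrix.map_mul]
    simp only [mul_add, add_mul, mul_one, one_mul, smul_mul_smul_comm, smul_neg, mul_neg]
    rw [← pow_two]
    congr 1
    abel
  have hPQ2 : (P * Q).coeff 2 = -(W * W).trace := by
    rw [hPQ, det_one_add_smul, ← AddMonoidHom.map_trace, ← pow_mul]
    simp [coeff_one, coeff_mul_X_pow']
  have hmul : (P * Q).coeff 2 =
      P.coeff 0 * Q.coeff 2 + P.coeff 1 * Q.coeff 1 + P.coeff 2 * Q.coeff 0 := by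
    simp [coeff_mul, Finset.Nat.antidiagonal_succ]
    ring
  have hcoeff0 (V : Matrix n n R) : (det (1 + (X : R[X]) • V.map C)).coeff 0 = 1 := by
    rw [coeff_zero_eq_eval_zero, eval_det_add_X_smul, det_one, eval_one]
  rw [hPQ2, hcoeff0, hcoeff0, hQ2, coeff_det_one_add_X_smul_one, coeff_det_one_add_X_smul_one,
    trace_neg] at hmul
  linear_combination -hmul

theorem charpoly_eq_X_pow_of_isNilpotent {R : Type*} [CommRing R] [IsDomain R]
    {A : Matrix n n R} (hA : IsNilpotent A) : A.charpoly = X ^ Fintype.card n :=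
  sub_eq_zero.mp (isNilpotent_charpoly_sub_pow_of_isNilpotent hA).eq_zero

theorem det_scalar_sub_of_isNilpotent {R : Type*} [CommRing R] [IsDomain R]
    {A : Matrix n n R} (hA : IsNilpotent A) (u : R) : det (scalar n u - A) = u ^ Fintype.card n := by
  rw [← eval_charpoly, charpoly_eq_X_pow_of_isNilpotent hA, eval_pow, eval_X]

theorem coeff_coeff_zero_charpoly_add_X_smul {R : Type*} [CommRing R] [IsDomain R]
    {A : Matrix n n R} (hA : IsNilpotent A) (B : Matrix n n R) (k : ℕ) :
    ((A.map C + (X : R[X]) • B.map C).charpoly.coeff k).coeff 0 =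
      if k = Fintype.card n then 1 else 0 := by
  have hN : (A.map C + (X : R[X]) • B.map C).map (evalRingHom 0) = A := by ext; simp
  rw [coeff_zero_eq_eval_zero, ← coe_evalRingHom, ← coeff_map, ← charpoly_map, hN,
    charpoly_eq_X_pow_of_isNilpotent hA, coeff_X_pow]

theorem det_map_C_add_X_smul_of_mul_eq {S : Type*} [CommRing S] {P W B : Matrix n n S}
    (h : P * W = B) :
    det (P.map C + (X : S[X]) • B.map C) = C P.det * det (1 + (X : S[X]) • W.map C) := by
  rw [← h, Matrix.map_mul, ← mul_smul_comm, ← mul_one_add, det_mul, RingHom.map_det]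
  rfl

end CommRing

section Field

variable {n F : Type*} [Fintype n] [DecidableEq n] [Field F] {A : Matrix n n F}

theorem scalar_sub_mul_eq_of_mul_self_eq_zero (hA : A * A = 0) {u : F} (hu : u ≠ 0)
    (B : Matrix n n F) : (scalar n u - A) * (u⁻¹ • B + u⁻¹ ^ 2 • (A * B)) = B := by
  simp only [sub_mul, mul_add, scalar_apply, ← smul_eq_diagonal_mul, mul_smul_comm,
    ← Matrix.mul_assoc, hA, Matrix.zero_mul, sub_zero, Matrix.smul_mul]
  match_scalars
  · field_simp
  · field_simp
    ring

theorem coeff_det_scalar_sub_add_X_smul (hA : A * A = 0) {u : F} (hu : u ≠ 0)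
    (B : Matrix n n F) (l : ℕ) :
    (det ((scalar n u - A).map C + (X : F[X]) • B.map C)).coeff l =
      u ^ Fintype.card n *
        (det (1 + (X : F[X]) • (u⁻¹ • B + u⁻¹ ^ 2 • (A * B)).map C)).coeff l := by
  rw [det_map_C_add_X_smul_of_mul_eq (scalar_sub_mul_eq_of_mul_self_eq_zero hA hu B),
    det_scalar_sub_of_isNilpotent ⟨2, by rw [sq, hA]⟩, coeff_C_mul]

theorem coeff_one_det_scalar_sub_add_X_smul (hA : A * A = 0) {u : F} (hu : u ≠ 0)
    (B : Matrix n n F) :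
    (det ((scalar n u - A).map C + (X : F[X]) • B.map C)).coeff 1 =
      u ^ Fintype.card n * (u⁻¹ * trace B + u⁻¹ ^ 2 * trace (A * B)) := by
  rw [coeff_det_scalar_sub_add_X_smul hA hu, coeff_det_one_add_X_smul_one, trace_add, trace_smul,
    trace_smul, smul_eq_mul, smul_eq_mul]

theorem two_mul_coeff_two_det_scalar_sub_add_X_smul (hA : A * A = 0) {u : F} (hu : u ≠ 0)
    (B : Matrix n n F) :
    2 * (det ((scalar n u - A).map C + (X : F[X]) • B.map C)).coeff 2 =
      u ^ Fintype.card n * ((u⁻¹ * trace B + u⁻¹ ^ 2 * trace (A * B)) ^ 2 -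
        (u⁻¹ ^ 2 * trace (B * B) + 2 * u⁻¹ ^ 3 * trace (A * B * B) +
          u⁻¹ ^ 4 * trace (A * B * (A * B)))) := by
  rw [coeff_det_scalar_sub_add_X_smul hA hu, mul_left_comm, two_mul_coeff_two_det_one_add_X_smul,
    trace_mul_self_smul_add_smul_mul, trace_add, trace_smul, trace_smul, smul_eq_mul, smul_eq_mul]

end Field

section Pencil

variable {K n : Type*} [Field K] [Fintype n] [DecidableEq n]

theorem map_swap_charpoly_add_X_smul (A B : Matrix n n K) :
    (Bivariate.swap (A.map C + (X : K[X]) • B.map C).charpoly).map (algebraMap K[X] (RatFunc K)) =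
      det ((scalar n RatFunc.X - A.map RatFunc.C).map C +
        (X : (RatFunc K)[X]) • (-B.map RatFunc.C).map C) := by
  rw [charpoly, AlgEquiv.map_det, ← coe_mapRingHom, RingHom.map_det]
  congr 1
  refine Matrix.ext fun i j => ?_
  rcases eq_or_ne i j with rfl | h
  · simp [charmatrix_apply_eq, RatFunc.algebraMap_C, swap_X, swap_Y, swap_C_C]; ring
  · simp [h, RatFunc.algebraMap_C, swap_X, swap_C_C]; ring

theorem X_sq_mul_swap_charpoly_add_X_smul_coeff_one {A : Matrix n n K} (hA : A * A = 0)
    (B : Matrix n n K) :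
    X ^ 2 * (Bivariate.swap (A.map C + (X : K[X]) • B.map C).charpoly).coeff 1 =
      -(C (trace B) * X ^ (Fintype.card n + 1) + C (trace (A * B)) * X ^ Fintype.card n) := by
  have hAK : A.map RatFunc.C * A.map RatFunc.C = 0 := by
    rw [← Matrix.map_mul, hA, Matrix.map_zero _ (map_zero _)]
  have hX : (RatFunc.X : RatFunc K) ≠ 0 := RatFunc.X_ne_zero
  apply RatFunc.algebraMap_injective
  rw [map_mul, ← coeff_map, map_swap_charpoly_add_X_smul,
    coeff_one_det_scalar_sub_add_X_smul hAK hX]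
  simp only [map_neg, map_add, map_mul, map_pow, RatFunc.algebraMap_X, RatFunc.algebraMap_C,
    trace_neg, mul_neg, ← Matrix.map_mul, ← AddMonoidHom.map_trace]
  field_simp
  ring

theorem two_mul_X_pow_four_mul_swap_charpoly_add_X_smul_coeff_two {A : Matrix n n K}
    (hA : A * A = 0) (B : Matrix n n K) :
    2 * X ^ 4 * (Bivariate.swap (A.map C + (X : K[X]) • B.map C).charpoly).coeff 2 =
      C (trace B ^ 2 - trace (B * B)) * X ^ (Fintype.card n + 2) +
      C (2 * (trace B * trace (A * B) - trace (A * B * B))) * X ^ (Fintype.card n + 1) +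
      C (trace (A * B) ^ 2 - trace (A * B * (A * B))) * X ^ Fintype.card n := by
  have hAK : A.map RatFunc.C * A.map RatFunc.C = 0 := by
    rw [← Matrix.map_mul, hA, Matrix.map_zero _ (map_zero _)]
  have hX : (RatFunc.X : RatFunc K) ≠ 0 := RatFunc.X_ne_zero
  apply RatFunc.algebraMap_injective
  rw [mul_right_comm, map_mul, map_mul, map_ofNat, ← coeff_map, map_swap_charpoly_add_X_smul,
    two_mul_coeff_two_det_scalar_sub_add_X_smul hAK hX]
  simp only [map_add, map_sub, map_mul, map_pow, map_ofNat, RatFunc.algebraMap_X,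
    RatFunc.algebraMap_C, trace_neg, mul_neg, neg_mul, neg_neg, ← Matrix.map_mul,
    ← AddMonoidHom.map_trace]
  field_simp
  ring

theorem coeff_coeff_one_charpoly_add_X_smul {A : Matrix n n K} (hA : A * A = 0)
    (B : Matrix n n K) (k : ℕ) :
    ((A.map C + (X : K[X]) • B.map C).charpoly.coeff k).coeff 1 =
      -((if k + 1 = Fintype.card n then trace B else 0) +
        if k + 2 = Fintype.card n then trace (A * B) else 0) := by
  have h := congrArg (coeff · (k + 2)) (X_sq_mul_swap_charpoly_add_X_smul_coeff_one hA B)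
  rw [← coeff_coeff_swap]
  simpa [coeff_X_pow_mul', coeff_C_mul_X_pow] using h

theorem two_mul_coeff_coeff_two_charpoly_add_X_smul {A : Matrix n n K} (hA : A * A = 0)
    (B : Matrix n n K) (k : ℕ) :
    2 * ((A.map C + (X : K[X]) • B.map C).charpoly.coeff k).coeff 2 =
      (if k + 2 = Fintype.card n then trace B ^ 2 - trace (B * B) else 0) +
      (if k + 3 = Fintype.card n then 2 * (trace B * trace (A * B) - trace (A * B * B)) else 0) +
      if k + 4 = Fintype.card n then trace (A * B) ^ 2 - trace (A * B * (A * B)) else 0 := by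
  have h := congrArg (coeff · (k + 4))
    (two_mul_X_pow_four_mul_swap_charpoly_add_X_smul_coeff_two hA B)
  rw [mul_assoc] at h
  rw [← coeff_coeff_swap]
  simp only [coeff_ofNat_mul, coeff_X_pow_mul', coeff_add, coeff_C_mul_X_pow] at h
  simpa using h

end Pencil

end Matrix

theorem Xmin12_mul_self : Xmin12 * Xmin12 = 0 := by
  ext i j
  simp [Xmin12, mul_apply, Matrix.single, Fin.sum_univ_six]

theorem two_mul_trace_Xmin12_mul_sq {M : Matrix (Fin 6) (Fin 6) ℂ}
    (hM : M.transpose * J6 + J6 * M = 0) :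
    2 * trace (Xmin12 * M * (Xmin12 * M)) = trace (Xmin12 * M) ^ 2 := by
  have h40 := congrFun₂ hM 4 0
  have h44 := congrFun₂ hM 4 4
  -- the `(4, 0)` and `(4, 4)` entries of `hM` say `M 3 4 = -M 1 0` and `M 1 4 = 0`
  simp [J6, mul_apply, Fin.sum_univ_six] at h40 h44
  simp [Xmin12, trace, mul_apply, Matrix.single, Fin.sum_univ_six]
  linear_combination (M 3 4 + M 1 0) * h40 - 4 * M 3 0 * h44

/- With `cp` the characteristic polynomial of `X + y·M`, `φ₂ = (cp.coeff 4) / y²` and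
`φ₄ = (cp.coeff 2) / y⁴`, so `c⁽²⁾₁ = (cp.coeff 4).coeff 1` and `c⁽⁴⁾₂ = (cp.coeff 2).coeff 2`. -/
theorem d3_minimal_puncture_constraint (M : Matrix (Fin 6) (Fin 6) ℂ)
    (hM : M.transpose * J6 + J6 * M = 0) :
    ∃ a : ℂ,
      ((higgsNum M).charpoly.coeff 4).coeff 0 = 0 ∧
      ((higgsNum M).charpoly.coeff 4).coeff 1 = 2 * a ∧
      ((higgsNum M).charpoly.coeff 2).coeff 0 = 0 ∧
      ((higgsNum M).charpoly.coeff 2).coeff 1 = 0 ∧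
      ((higgsNum M).charpoly.coeff 2).coeff 2 = a ^ 2 ∧
      ((higgsNum M).charpoly.coeff 2).coeff 2 =
        (1 / 4 : ℂ) * (((higgsNum M).charpoly.coeff 4).coeff 1) ^ 2 := by
  have hnil : IsNilpotent Xmin12 := ⟨2, by rw [sq, Xmin12_mul_self]⟩
  have h40 := coeff_coeff_zero_charpoly_add_X_smul hnil M 4
  have h20 := coeff_coeff_zero_charpoly_add_X_smul hnil M 2
  have h41 := coeff_coeff_one_charpoly_add_X_smul Xmin12_mul_self M 4
  have h21 := coeff_coeff_one_charpoly_add_X_smul Xmin12_mul_self M 2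
  have h22 := two_mul_coeff_coeff_two_charpoly_add_X_smul Xmin12_mul_self M 2
  norm_num at h40 h20 h41 h21 h22
  rw [higgsNum]
  have hso := two_mul_trace_Xmin12_mul_sq hM
  refine ⟨-trace (Xmin12 * M) / 2, h40, ?_, h20, h21, ?_, ?_⟩
  · rw [h41]; ring
  · linear_combination h22 / 2 - hso / 4
  · rw [h41]
    linear_combination h22 / 2 - hso / 4
end

section
/- Row D-collapse terminates: starting from any finite weakly decreasing sequence of positive integers (a Young diagram given by row lengths), the process of repeatedly removing a box from the last even-length row occurring with odd multiplicity and appending it to the next available row so as to preserve the Young-diagram (weakly decreasing) condition terminates after finitely many steps in a sequence whose multiset of values has every even value occurring with even multiplicity. -/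
/-- A Young diagram, given by its weakly decreasing list of positive row lengths. -/
def IsYoung (l : List ℕ) : Prop := l.Pairwise (· ≥ ·) ∧ ∀ x ∈ l, 0 < x

/-- A D-partition: every even part occurs with even multiplicity. -/
def IsDPartition (l : List ℕ) : Prop := ∀ v, Even v → Even (l.count v)

/-- One step of row D-collapse: take the largest even value `v` occurring with odd
multiplicity, remove a box from its last row (row `i`), and add it to a lower row
`j > i` (or append a new row of length 1) so that the result is again weakly
decreasing. -/
def DCollapseStep (l l' : List ℕ) : Prop :=
  ∃ v i, Even v ∧ Odd (l.count v) ∧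
    (∀ w, Even w → Odd (l.count w) → w ≤ v) ∧
    i < l.length ∧ l.getD i 0 = v ∧
    (∀ k, i < k → k < l.length → l.getD k 0 ≠ v) ∧
    ((∃ j, i < j ∧ j < l.length ∧
        l' = (l.set i (v - 1)).set j (l.getD j 0 + 1)) ∨
      l' = l.set i (v - 1) ++ [1]) ∧
    l'.Pairwise (· ≥ ·)

/-!
Each step moves a box from a row of length `v` to a row of length at most `v - 2` (possibly
a new empty one), so the sum of the squares of the row lengths drops by at least `2`; hence
there is no infinite chain of steps. Steps keep the diagram a Young diagram, and as long as
some even part has odd multiplicity a step is available: after shortening the last row of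
the largest such length `v`, the box goes to the first lower row of length at most `v - 2`,
or to a new row if all lower rows have length `v - 1`.
-/

namespace List

variable {α : Type*}

theorem getD_set_of_ne {l : List α} {i k : ℕ} (h : i ≠ k) (a d : α) :
    (l.set i a).getD k d = l.getD k d := by
  simp [getD_eq_getElem?_getD, getElem?_set_ne h]

theorem getD_set_self {l : List α} {i : ℕ} (h : i < l.length) (a d : α) :
    (l.set i a).getD i d = a := by
  simp [getD_eq_getElem?_getD, h]

theorem exists_last_getD_eq {l : List α} {a d : α} (ha : a ∈ l) :
    ∃ i < l.length, l.getD i d = a ∧ ∀ k, i < k → k < l.length → l.getD k d ≠ a := by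
  set S := {k | k < l.length ∧ l.getD k d = a}
  have hne : S.Nonempty := by
    obtain ⟨k, hk, rfl⟩ := mem_iff_getElem.mp ha
    exact ⟨k, hk, getD_eq_getElem _ _ hk⟩
  have hbdd : BddAbove S := ⟨l.length, fun k hk => hk.1.le⟩
  obtain ⟨hi, hia⟩ := Nat.sSup_mem hne hbdd
  exact ⟨sSup S, hi, hia, fun k hik hk hka => (le_csSup hbdd ⟨hk, hka⟩).not_gt hik⟩

end List

theorem getD_le_getD_of_pairwise_ge {l : List ℕ} (hl : l.Pairwise (· ≥ ·)) {i j : ℕ}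
    (hij : i ≤ j) : l.getD j 0 ≤ l.getD i 0 := by
  by_cases hj : j < l.length
  · rw [List.getD_eq_getElem _ _ hj, List.getD_eq_getElem _ _ (hij.trans_lt hj)]
    rcases hij.eq_or_lt with rfl | hlt
    · rfl
    · exact List.pairwise_iff_getElem.mp hl i j _ hj hlt
  · rw [List.getD_eq_default _ _ (not_lt.mp hj)]
    exact Nat.zero_le _

theorem pairwise_ge_set {l : List ℕ} (hl : l.Pairwise (· ≥ ·)) {i a : ℕ}
    (hbefore : ∀ k < i, a ≤ l.getD k 0) (hafter : ∀ k, i < k → k < l.length → l.getD k 0 ≤ a) :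
    (l.set i a).Pairwise (· ≥ ·) := by
  rw [List.pairwise_iff_getElem]
  intro p q hp hq hpq
  rw [List.length_set] at hp hq
  simp only [List.getElem_set, ← List.getD_eq_getElem l 0 hp, ← List.getD_eq_getElem l 0 hq]
  split_ifs with hip hiq hiq
  · omega
  · exact hafter q (hip ▸ hpq) hq
  · exact hbefore p (hiq ▸ hpq)
  · exact getD_le_getD_of_pairwise_ge hl hpq.le

theorem pairwise_ge_set_last_sub_one {l : List ℕ} (hl : l.Pairwise (· ≥ ·)) {i v : ℕ}
    (hv : l.getD i 0 = v) (hlast : ∀ k, i < k → k < l.length → l.getD k 0 ≠ v) :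
    (l.set i (v - 1)).Pairwise (· ≥ ·) := by
  have hmono := @getD_le_getD_of_pairwise_ge l hl
  refine pairwise_ge_set hl (fun k hk => ?_) (fun k hik hk => ?_)
  · have := hmono hk.le
    omega
  · have := hmono hik.le
    have := hlast k hik hk
    omega

theorem pairwise_ge_move_box {l : List ℕ} (hl : l.Pairwise (· ≥ ·)) {i j v : ℕ}
    (hv : l.getD i 0 = v) (hlast : ∀ k, i < k → k < l.length → l.getD k 0 ≠ v) (hij : i < j)
    (hjv : l.getD j 0 + 2 ≤ v) (hmin : ∀ k, i < k → k < j → v ≤ l.getD k 0 + 1) :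
    ((l.set i (v - 1)).set j (l.getD j 0 + 1)).Pairwise (· ≥ ·) := by
  have hmono := @getD_le_getD_of_pairwise_ge l hl
  have hi : i < l.length := by
    by_contra! hi
    rw [List.getD_eq_default _ _ hi] at hv
    omega
  refine pairwise_ge_set (pairwise_ge_set_last_sub_one hl hv hlast) (fun k hkj => ?_)
    (fun k hjk _ => ?_)
  · rcases lt_trichotomy k i with hki | rfl | hik
    · rw [List.getD_set_of_ne hki.ne']
      have := hmono hki.le
      omega
    · rw [List.getD_set_self hi]
      omega
    · rw [List.getD_set_of_ne hik.ne]
      have := hmin k hik hkj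
      omega
  · rw [List.getD_set_of_ne (hij.trans hjk).ne]
    have := hmono hjk.le
    omega

theorem pairwise_ge_set_sub_one_append_one {l : List ℕ} (hl : IsYoung l) {i v : ℕ}
    (hv : l.getD i 0 = v) (hlast : ∀ k, i < k → k < l.length → l.getD k 0 ≠ v) (hv2 : 2 ≤ v) :
    (l.set i (v - 1) ++ [1]).Pairwise (· ≥ ·) := by
  refine List.pairwise_append.mpr ⟨pairwise_ge_set_last_sub_one hl.1 hv hlast, by simp, ?_⟩
  intro x hx y hy
  rw [List.mem_singleton.mp hy]
  rcases List.mem_or_eq_of_mem_set hx with hx | rfl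
  · exact hl.2 x hx
  · omega

theorem two_le_of_even_of_odd_count {l : List ℕ} (hpos : ∀ x ∈ l, 0 < x) {v : ℕ}
    (hv : Even v) (hc : Odd (l.count v)) : 2 ≤ v := by
  have := hpos v (List.count_pos_iff.mp hc.pos)
  have := hv.two_dvd
  omega

theorem exists_greatest_even_odd_count {l : List ℕ} (h : ¬ IsDPartition l) :
    ∃ v, Even v ∧ Odd (l.count v) ∧ ∀ w, Even w → Odd (l.count w) → w ≤ v := by
  set S := {w | Even w ∧ Odd (l.count w)}
  have hne : S.Nonempty := by simpa [IsDPartition, S, Set.Nonempty] using h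
  have hbdd : BddAbove S := l.toFinset.bddAbove.mono fun w hw =>
    List.mem_toFinset.mpr (List.count_pos_iff.mp hw.2.pos)
  obtain ⟨hve, hvc⟩ := Nat.sSup_mem hne hbdd
  exact ⟨sSup S, hve, hvc, fun w hw hc => le_csSup hbdd ⟨hw, hc⟩⟩

theorem exists_dCollapseStep {l : List ℕ} (hl : IsYoung l) (hD : ¬ IsDPartition l) :
    ∃ l', DCollapseStep l l' := by
  obtain ⟨v, hve, hvc, hvmax⟩ := exists_greatest_even_odd_count hD
  have hv2 := two_le_of_even_of_odd_count hl.2 hve hvc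
  obtain ⟨i, hi, hiv, hlast⟩ := List.exists_last_getD_eq (d := 0) (List.count_pos_iff.mp hvc.pos)
  by_cases hmove : ∃ j, i < j ∧ j < l.length ∧ l.getD j 0 + 2 ≤ v
  · obtain ⟨hij, hj, hjv⟩ := Nat.find_spec hmove
    refine ⟨_, v, i, hve, hvc, hvmax, hi, hiv, hlast, Or.inl ⟨_, hij, hj, rfl⟩,
      pairwise_ge_move_box hl.1 hiv hlast hij hjv fun k hik hkj => ?_⟩
    have := Nat.find_min hmove hkj
    omega
  · exact ⟨_, v, i, hve, hvc, hvmax, hi, hiv, hlast, Or.inr rfl,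
      pairwise_ge_set_sub_one_append_one hl hiv hlast hv2⟩

theorem DCollapseStep.isYoung {l l' : List ℕ} (hl : IsYoung l) (h : DCollapseStep l l') :
    IsYoung l' := by
  obtain ⟨v, i, hve, hvc, -, -, -, -, hmove, hsort⟩ := h
  have hv2 := two_le_of_even_of_odd_count hl.2 hve hvc
  have hset : ∀ x ∈ l.set i (v - 1), 0 < x := fun x hx =>
    (List.mem_or_eq_of_mem_set hx).elim (hl.2 x) (by omega)
  refine ⟨hsort, ?_⟩
  rcases hmove with ⟨j, -, -, rfl⟩ | rfl
  · intro x hx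
    rcases List.mem_or_eq_of_mem_set hx with hx | rfl
    exacts [hset x hx, Nat.succ_pos _]
  · simpa [or_imp, forall_and] using hset

def sumSq (l : List ℕ) : ℕ := (l.map (· ^ 2)).sum

theorem sumSq_set {l : List ℕ} {i : ℕ} (hi : i < l.length) (a : ℕ) :
    sumSq (l.set i a) + l.getD i 0 ^ 2 = sumSq l + a ^ 2 := by
  induction l generalizing i with
  | nil => simp at hi
  | cons x xs ih =>
    cases i with
    | zero => simp [sumSq]; ring
    | succ i =>
      have := ih (by simpa using hi)
      simp only [sumSq, List.set_cons_succ, List.map_cons, List.sum_cons,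
        List.getD_cons_succ] at this ⊢
      omega

theorem DCollapseStep.sumSq_lt {l l' : List ℕ} (h : DCollapseStep l l') : sumSq l' < sumSq l := by
  obtain ⟨v, i, -, -, -, hi, hiv, -, hmove, hsort⟩ := h
  have hset := sumSq_set hi (v - 1)
  rw [hiv] at hset
  rcases hmove with ⟨j, hij, hj, rfl⟩ | rfl
  · have hj' : j < (l.set i (v - 1)).length := by rwa [List.length_set]
    have hset' := sumSq_set hj' (l.getD j 0 + 1)
    rw [List.getD_set_of_ne hij.ne] at hset'
    have hle := getD_le_getD_of_pairwise_ge hsort hij.le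
    rw [List.getD_set_self (by rwa [List.length_set]), List.getD_set_of_ne hij.ne',
      List.getD_set_self hi] at hle
    obtain ⟨u, rfl⟩ : ∃ u, v = u + 1 := ⟨v - 1, by omega⟩
    rw [Nat.add_sub_cancel] at hset hset' hle ⊢
    nlinarith
  · have hle : 1 ≤ v - 1 := (List.pairwise_append.mp hsort).2.2 _ (List.mem_set hi _) 1 (by simp)
    have happ : sumSq (l.set i (v - 1) ++ [1]) = sumSq (l.set i (v - 1)) + 1 := by simp [sumSq]
    obtain ⟨u, rfl⟩ : ∃ u, v = u + 1 := ⟨v - 1, by omega⟩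
    rw [Nat.add_sub_cancel] at hset hle happ ⊢
    nlinarith

theorem wellFounded_flip_dCollapseStep : WellFounded (flip DCollapseStep) :=
  Subrelation.wf (fun h => h.sumSq_lt) (InvImage.wf sumSq wellFounded_lt)

theorem isYoung_of_reflTransGen {l m : List ℕ} (hl : IsYoung l)
    (h : Relation.ReflTransGen DCollapseStep l m) : IsYoung m := by
  induction h with
  | refl => exact hl
  | tail _ hstep ih => exact hstep.isYoung ih

theorem dCollapse_terminates_in_DPartition (l : List ℕ) (hl : IsYoung l) :
    (¬ ∃ f : ℕ → List ℕ, f 0 = l ∧ ∀ n, DCollapseStep (f n) (f (n + 1))) ∧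
    (∀ m, Relation.ReflTransGen DCollapseStep l m →
      (∀ m', ¬ DCollapseStep m m') → IsDPartition m) := by
  refine ⟨fun ⟨f, _, hf⟩ => ?_, fun m hm hstuck => ?_⟩
  · exact (wellFounded_iff_isEmpty_descending_chain.mp wellFounded_flip_dCollapseStep).false
      ⟨f, hf⟩
  · by_contra hD
    obtain ⟨m', hstep⟩ := exists_dCollapseStep (isYoung_of_reflTransGen hl hm) hD
    exact hstuck m' hstep
end
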